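/- arXiv:1402.2094 — 6 statements merged into one kernel-verified Lean document; each statement's English description precedes it below -/
import Mathlib

section
/- For any α ∈ (0,1), the probability under θ that θ*(α,Y) ≤ θ equals α. -/
open MeasureTheory Set Filter Topology

/-- Extended pivoting method: for any α ∈ (0,1), P_θ{θ*(α,Y) ≤ θ} = α. -/
theorem pivot_cdf_prob_theta_star
    (tl tu : EReal) (htltu : tl < tu)
    (F : ℝ → ℝ → ℝ)  -- F y θ : CDF of Y at y under parameter θ
    (Θ : Set ℝ) (hΘ : Θ = {θ : ℝ | tl < (θ : EReal) ∧ (θ : EReal) < tu})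
    (hFy : ∀ θ ∈ Θ, Continuous (fun y => F y θ))
    (hFθ : ∀ y : ℝ, ContinuousOn (fun θ => F y θ) Θ)
    (hanti : ∀ y : ℝ, StrictAntiOn (fun θ => F y θ) Θ)
    (μ : ℝ → Measure ℝ) (hprob : ∀ θ ∈ Θ, IsProbabilityMeasure (μ θ))
    (hcdf : ∀ θ ∈ Θ, ∀ y : ℝ, ((μ θ) (Iic y)).toReal = F y θ)
    (Flo Fhi : ℝ → ℝ)
    (hFlo : ∀ y, Flo y = sSup ((fun θ => F y θ) '' Θ))   -- limit of F(y;θ) as θ ↓ θ̲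
    (hFhi : ∀ y, Fhi y = sInf ((fun θ => F y θ) '' Θ))   -- limit of F(y;θ) as θ ↑ θ̄
    (θstar : ℝ → ℝ → EReal)
    (hstar1 : ∀ α y, Flo y ≤ α → θstar α y = tl)
    (hstar2 : ∀ α y, α ≤ Fhi y → θstar α y = tu)
    (hstar3 : ∀ α y, Fhi y < α → α < Flo y →
      ∃ t ∈ Θ, F y t = α ∧ θstar α y = (t : EReal))
    (α : ℝ) (hα : α ∈ Ioo (0:ℝ) 1) (θ : ℝ) (hθ : θ ∈ Θ) :
    μ θ {y : ℝ | θstar α y ≤ (θ : EReal)} = ENNReal.ofReal α := by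
  obtain ⟨hθl, hθu⟩ : tl < (θ : EReal) ∧ (θ : EReal) < tu := by rw [hΘ] at hθ; exact hθ
  haveI hprobθ : IsProbabilityMeasure (μ θ) := hprob θ hθ
  set G : ℝ → ℝ := fun y => F y θ with hGdef
  have hcdfθ : ∀ y, ((μ θ) (Iic y)).toReal = G y := hcdf θ hθ
  -- basic bounds for F on Θ
  have hF01 : ∀ θ' ∈ Θ, ∀ y : ℝ, 0 ≤ F y θ' ∧ F y θ' ≤ 1 := by
    intro θ' hθ' y
    haveI := hprob θ' hθ'
    rw [← hcdf θ' hθ' y]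
    refine ⟨ENNReal.toReal_nonneg, ?_⟩
    have h1 : (μ θ') (Iic y) ≤ 1 := prob_le_one
    calc ((μ θ') (Iic y)).toReal ≤ (1 : ENNReal).toReal :=
          ENNReal.toReal_mono ENNReal.one_ne_top h1
      _ = 1 := by simp
  have hbddA : ∀ y, BddAbove ((fun θ => F y θ) '' Θ) := by
    intro y
    exact ⟨1, by rintro x ⟨θ', hθ', rfl⟩; exact (hF01 θ' hθ' y).2⟩
  have hbddB : ∀ y, BddBelow ((fun θ => F y θ) '' Θ) := by
    intro y
    exact ⟨0, by rintro x ⟨θ', hθ', rfl⟩; exact (hF01 θ' hθ' y).1⟩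
  have hle_Flo : ∀ y, G y ≤ Flo y := by
    intro y
    rw [hFlo]
    exact le_csSup (hbddA y) ⟨θ, hθ, rfl⟩
  have hFhi_le : ∀ y, ∀ θ' ∈ Θ, Fhi y ≤ F y θ' := by
    intro y θ' hθ'
    rw [hFhi]
    exact csInf_le (hbddB y) ⟨θ', hθ', rfl⟩
  -- a point of Θ strictly to the right of θ
  obtain ⟨θ', hθθ', hθ'u⟩ := EReal.exists_between_coe_real hθu
  have hθ'Θ : θ' ∈ Θ := by rw [hΘ]; exact ⟨lt_trans hθl hθθ', hθ'u⟩
  have hθltθ' : θ < θ' := by exact_mod_cast hθθ'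
  -- monotonicity and continuity of G
  have hGmono : Monotone G := by
    intro a b hab
    rw [← hcdfθ a, ← hcdfθ b]
    exact ENNReal.toReal_mono (measure_ne_top _ _) (measure_mono (Iic_subset_Iic.2 hab))
  have hGcont : Continuous G := hFy θ hθ
  -- the key set identity
  have hset : {y : ℝ | θstar α y ≤ (θ : EReal)} = {y : ℝ | G y ≤ α} := by
    ext y
    simp only [mem_setOf_eq]
    by_cases h1 : Flo y ≤ α
    · constructor
      · intro _; exact le_trans (hle_Flo y) h1
      · intro _; rw [hstar1 α y h1]; exact le_of_lt hθl
    · push_neg at h1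
      by_cases h2 : α ≤ Fhi y
      · constructor
        · intro h
          rw [hstar2 α y h2] at h
          exact absurd (lt_of_lt_of_le hθu h) (lt_irrefl _)
        · intro h
          exfalso
          have hlt : F y θ' < F y θ := hanti y hθ hθ'Θ hθltθ'
          have := hFhi_le y θ' hθ'Θ
          have : α ≤ F y θ' := le_trans h2 this
          exact absurd (lt_of_le_of_lt this hlt) (not_lt.2 h)
      · push_neg at h2
        obtain ⟨t, htΘ, hFt, hts⟩ := hstar3 α y h2 h1
        rw [hts, EReal.coe_le_coe_iff]
        constructor
        · intro h
          rcases eq_or_lt_of_le h with rfl | h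
          · exact hFt.le
          · exact le_of_lt (hFt ▸ hanti y htΘ hθ h)
        · intro h
          by_contra hc
          push_neg at hc
          have h3 : F y t < F y θ := hanti y hθ htΘ hc
          rw [hFt] at h3
          exact absurd h3 (not_lt.2 h)
  rw [hset]
  -- S is nonempty: some point with G ≤ α
  have hne : ∃ a : ℝ, G a ≤ α := by
    have h1 : ENNReal.ofReal (1 - α) < (μ θ) univ := by
      rw [measure_univ]
      exact ENNReal.ofReal_lt_one.2 (by linarith [hα.1])
    have := (tendsto_measure_Ici_atBot (μ θ)).eventually (eventually_gt_nhds h1)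
    obtain ⟨x, hx⟩ := this.exists
    refine ⟨x - 1, ?_⟩
    have hdisj : Disjoint (Iic (x - 1)) (Ici x) := by
      apply Set.disjoint_left.2
      intro z hz hz'
      simp only [mem_Iic] at hz
      simp only [mem_Ici] at hz'
      linarith
    have hsum : (μ θ) (Iic (x - 1)) + (μ θ) (Ici x) ≤ 1 := by
      rw [← measure_union hdisj measurableSet_Ici]
      calc (μ θ) (Iic (x - 1) ∪ Ici x) ≤ (μ θ) univ := measure_mono (subset_univ _)
        _ = 1 := measure_univ
    have ha := measure_ne_top (μ θ) (Iic (x - 1))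
    have hb := measure_ne_top (μ θ) (Ici x)
    have hsum' : ((μ θ) (Iic (x - 1))).toReal + ((μ θ) (Ici x)).toReal ≤ 1 := by
      rw [← ENNReal.toReal_add ha hb]
      calc ((μ θ) (Iic (x - 1)) + (μ θ) (Ici x)).toReal ≤ (1 : ENNReal).toReal :=
            ENNReal.toReal_mono ENNReal.one_ne_top hsum
        _ = 1 := by simp
    have hbr : 1 - α ≤ ((μ θ) (Ici x)).toReal := by
      have := ENNReal.toReal_mono hb hx.le
      rwa [ENNReal.toReal_ofReal (by linarith [hα.2])] at this
    have := hcdfθ (x - 1)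
    linarith [hsum', hbr, this.symm.le, this.le]
  -- S is bounded above: some point with α < G
  have hbd : ∃ b : ℝ, α < G b := by
    have h1 : ENNReal.ofReal α < (μ θ) univ := by
      rw [measure_univ]
      exact ENNReal.ofReal_lt_one.2 hα.2
    have := (tendsto_measure_Iic_atTop (μ θ)).eventually (eventually_gt_nhds h1)
    obtain ⟨x, hx⟩ := this.exists
    refine ⟨x, ?_⟩
    rw [← hcdfθ x]
    exact (ENNReal.ofReal_lt_iff_lt_toReal hα.1.le (measure_ne_top _ _)).1 hx
  obtain ⟨a, ha⟩ := hne
  obtain ⟨b, hb⟩ := hbd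
  set S : Set ℝ := {y : ℝ | G y ≤ α} with hSdef
  have hSne : S.Nonempty := ⟨a, ha⟩
  have hSbdd : BddAbove S := by
    refine ⟨b, fun y hy => ?_⟩
    by_contra hby
    push_neg at hby
    exact absurd (le_trans (hGmono hby.le) hy) (not_le.2 hb)
  have hSclosed : IsClosed S := isClosed_le hGcont continuous_const
  set c : ℝ := sSup S with hcdef
  have hcS : c ∈ S := hSclosed.csSup_mem hSne hSbdd
  have hSIic : S = Iic c := by
    ext y
    constructor
    · intro hy; exact le_csSup hSbdd hy
    · intro hy; exact le_trans (hGmono hy) hcS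
  have hGc : G c = α := by
    refine le_antisymm hcS ?_
    have htend : Tendsto G (𝓝[>] c) (𝓝 (G c)) :=
      (hGcont.tendsto c).mono_left nhdsWithin_le_nhds
    refine ge_of_tendsto htend ?_
    filter_upwards [eventually_mem_nhdsWithin] with y hy
    by_contra h
    push_neg at h
    exact absurd (le_csSup hSbdd h.le) (not_le.2 hy)
  have : (μ θ) (Iic c) = ENNReal.ofReal α := by
    have h1 : ((μ θ) (Iic c)).toReal = α := by rw [hcdfθ]; exact hGc
    rw [← h1, ENNReal.ofReal_toReal (measure_ne_top _ _)]
  rw [hSIic]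
  exact this
end

section
/- For integers 1 ≤ d₀ ≤ d ≤ n, fixed T > 0, y > 0 and integer 0 ≤ ν ≤ d, the limit as θ → ∞ of G({dy − (n−d+ν)T}/θ ; d) / P_θ(D ≥ d₀) equals 0 if d > d₀, and equals ((n−d₀)!/n!) · (max{d₀y − (n−d₀+ν)T, 0})^{d₀} / T^{d₀} if d = d₀. -/
open Filter Set

/-- CDF of the gamma distribution with integer shape d ≥ 1 and scale 1. -/
noncomputable def gammaCDF (x : ℝ) (d : ℕ) : ℝ :=
  (∫ u in (0:ℝ)..(max x 0), u ^ (d - 1) * Real.exp (-u)) / (Nat.factorial (d - 1))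

/-- P_θ(D ≥ d₀) where D ~ Binomial(n, 1 − e^{−T/θ}). -/
noncomputable def probDge (n d0 : ℕ) (T θ : ℝ) : ℝ :=
  ∑ j ∈ Finset.Icc d0 n,
    (n.choose j : ℝ) * (1 - Real.exp (-T / θ)) ^ j * Real.exp (-((n:ℝ) - j) * T / θ)

/-!
Multiply numerator and denominator by `θ ^ d₀`. Squeezing the gamma integrand between
`e^{-x} u^{d-1}` and `u^{d-1}` gives `G(x; d) ~ x^d / d!` as `x → 0⁺`, so `θ^{d₀} G(c/θ; d)`
tends to `c₊^{d₀} / d₀!` when `d = d₀` and to `0` when `d > d₀`. Since `θ (1 - e^{-T/θ}) → T`,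
only the `j = d₀` term of the binomial tail survives, and `θ^{d₀} P_θ(D ≥ d₀) → C(n, d₀) T^{d₀}`.
-/

open Topology

lemma tendsto_mul_exp_div_sub_one (a : ℝ) :
    Tendsto (fun θ : ℝ => θ * (Real.exp (a / θ) - 1)) atTop (𝓝 a) := by
  have hderiv : HasDerivAt (fun t => Real.exp (a * t)) a 0 := by
    simpa using ((hasDerivAt_id (0 : ℝ)).const_mul a).exp
  refine (hderiv.tendsto_slope_zero_right.comp tendsto_inv_atTop_nhdsGT_zero).congr' ?_
  filter_upwards [eventually_ne_atTop 0] with θ hθ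
  simp [div_eq_mul_inv]

lemma tendsto_pow_mul_pow_of_tendsto_mul {p : ℝ → ℝ} {T : ℝ}
    (hp : Tendsto (fun θ => θ * p θ) atTop (𝓝 T)) {k j : ℕ} (hkj : k ≤ j) :
    Tendsto (fun θ => θ ^ k * p θ ^ j) atTop (𝓝 (if j = k then T ^ k else 0)) := by
  have hp0 : Tendsto p atTop (𝓝 0) := by
    refine (mul_zero T ▸ hp.mul tendsto_inv_atTop_zero).congr' ?_
    filter_upwards [eventually_ne_atTop 0] with θ hθ
    field_simp
  have hlim := (hp.pow k).mul (hp0.pow (j - k))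
  have hval : T ^ k * 0 ^ (j - k) = if j = k then T ^ k else 0 := by
    split_ifs with h
    · simp [h]
    · simp [zero_pow (by omega : j - k ≠ 0)]
  rw [← hval]
  refine hlim.congr fun θ => ?_
  rw [mul_pow, mul_assoc, ← pow_add, Nat.add_sub_cancel' hkj]

lemma tendsto_pow_mul_probDge {n d0 : ℕ} (hd0n : d0 ≤ n) (T : ℝ) :
    Tendsto (fun θ => θ ^ d0 * probDge n d0 T θ) atTop (𝓝 (n.choose d0 * T ^ d0)) := by
  have hslope : Tendsto (fun θ : ℝ => θ * (1 - Real.exp (-T / θ))) atTop (𝓝 T) := by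
    simpa [mul_sub] using (tendsto_mul_exp_div_sub_one (-T)).neg
  have hterm : ∀ j ∈ Finset.Icc d0 n, Tendsto
      (fun θ : ℝ => θ ^ d0 * (1 - Real.exp (-T / θ)) ^ j *
        ((n.choose j : ℝ) * Real.exp (-((n:ℝ) - j) * T / θ))) atTop
      (𝓝 ((if j = d0 then T ^ d0 else 0) * ((n.choose j : ℝ) * Real.exp 0))) := fun j hj =>
    (tendsto_pow_mul_pow_of_tendsto_mul hslope (Finset.mem_Icc.mp hj).1).mul
      (((Real.continuous_exp.tendsto 0).comp
        (tendsto_const_nhds.div_atTop tendsto_id)).const_mul _)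
  have hsum := tendsto_finsetSum _ hterm
  simp only [ite_mul, zero_mul, Finset.sum_ite_eq', Finset.mem_Icc, le_refl, hd0n, and_self,
    if_true, Real.exp_zero, mul_one] at hsum
  refine (mul_comm (T ^ d0) _ ▸ hsum).congr fun θ => ?_
  simp only [probDge, Finset.mul_sum]
  exact Finset.sum_congr rfl fun j _ => by ring

lemma gammaCDF_of_nonpos {x : ℝ} (hx : x ≤ 0) (d : ℕ) : gammaCDF x d = 0 := by
  simp [gammaCDF, max_eq_right hx]

lemma gammaCDF_mem_Icc {x : ℝ} (hx : 0 ≤ x) {d : ℕ} (hd : d ≠ 0) :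
    gammaCDF x d ∈ Icc (Real.exp (-x) * (x ^ d / d.factorial)) (x ^ d / d.factorial) := by
  obtain ⟨k, rfl⟩ := Nat.exists_eq_succ_of_ne_zero hd
  have hpow : ∫ u in (0:ℝ)..x, u ^ k = x ^ (k + 1) / (k + 1) := by
    simp [integral_pow]
  have hfac : ((k + 1).factorial : ℝ) = (k + 1) * k.factorial := by
    push_cast [Nat.factorial_succ]; ring
  have hint : ∀ f : ℝ → ℝ, Continuous f → IntervalIntegrable f MeasureTheory.volume 0 x :=
    fun f hf => hf.intervalIntegrable 0 x
  rw [gammaCDF, max_eq_left hx, Nat.succ_sub_one, hfac]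
  constructor
  · have hle : ∫ u in (0:ℝ)..x, Real.exp (-x) * u ^ k ≤
        ∫ u in (0:ℝ)..x, u ^ k * Real.exp (-u) :=
      intervalIntegral.integral_mono_on hx (hint _ (by fun_prop)) (hint _ (by fun_prop))
        fun u hu => by
          rw [mul_comm]
          exact mul_le_mul_of_nonneg_left (Real.exp_le_exp.mpr (by linarith [hu.2]))
            (pow_nonneg hu.1 k)
    rw [intervalIntegral.integral_const_mul, hpow] at hle
    rw [le_div_iff₀ (by positivity)]
    calc _ = Real.exp (-x) * (x ^ (k + 1) / (k + 1)) := by field_simp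
      _ ≤ _ := hle
  · have hle : ∫ u in (0:ℝ)..x, u ^ k * Real.exp (-u) ≤ ∫ u in (0:ℝ)..x, u ^ k :=
      intervalIntegral.integral_mono_on hx (hint _ (by fun_prop)) (hint _ (by fun_prop))
        fun u hu => mul_le_of_le_one_right (pow_nonneg hu.1 k)
          (Real.exp_le_one_iff.mpr (by linarith [hu.1]))
    rw [hpow] at hle
    rw [div_le_iff₀ (by positivity)]
    calc _ ≤ x ^ (k + 1) / (k + 1) := hle
      _ = _ := by field_simp

lemma tendsto_gammaCDF_div_pow {d : ℕ} (hd : d ≠ 0) :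
    Tendsto (fun x => gammaCDF x d / x ^ d) (𝓝[>] 0) (𝓝 (d.factorial : ℝ)⁻¹) := by
  have hexp : Tendsto (fun x : ℝ => Real.exp (-x) * (d.factorial : ℝ)⁻¹) (𝓝[>] 0)
      (𝓝 (d.factorial : ℝ)⁻¹) := by
    have := ((Real.continuous_exp.comp continuous_neg).tendsto 0).mono_left
      (nhdsWithin_le_nhds (s := Ioi 0))
    simpa using this.mul_const (d.factorial : ℝ)⁻¹
  refine tendsto_of_tendsto_of_tendsto_of_le_of_le' hexp tendsto_const_nhds ?_ ?_ <;>
  filter_upwards [self_mem_nhdsWithin] with x (hx : 0 < x) <;>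
  have hxd : 0 < x ^ d := pow_pos hx d
  · rw [le_div_iff₀ hxd]
    calc _ = Real.exp (-x) * (x ^ d / d.factorial) := by ring
      _ ≤ _ := (gammaCDF_mem_Icc hx.le hd).1
  · rw [div_le_iff₀ hxd]
    calc _ ≤ x ^ d / d.factorial := (gammaCDF_mem_Icc hx.le hd).2
      _ = _ := by ring

lemma tendsto_pow_mul_gammaCDF_div {d k : ℕ} (hk : k ≠ 0) (hkd : k ≤ d) (c : ℝ) :
    Tendsto (fun θ => θ ^ k * gammaCDF (c / θ) d) atTop
      (𝓝 (if d = k then max c 0 ^ k / k.factorial else 0)) := by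
  rcases le_or_gt c 0 with hc | hc
  · have hzero : (if d = k then max c 0 ^ k / k.factorial else 0 : ℝ) = 0 := by
      simp [max_eq_right hc, zero_pow hk]
    rw [hzero]
    refine tendsto_const_nhds.congr' ?_
    filter_upwards [eventually_gt_atTop 0] with θ hθ
    rw [gammaCDF_of_nonpos (div_nonpos_of_nonpos_of_nonneg hc hθ.le), mul_zero]
  have hcθ : Tendsto (fun θ : ℝ => c / θ) atTop (𝓝[>] 0) :=
    tendsto_nhdsWithin_iff.mpr ⟨tendsto_const_nhds.div_atTop tendsto_id,
      (eventually_gt_atTop 0).mono fun θ hθ => div_pos hc hθ⟩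
  have hpow : Tendsto (fun θ : ℝ => θ ^ k * (c / θ) ^ d) atTop
      (𝓝 (if d = k then c ^ k else 0)) := by
    refine tendsto_pow_mul_pow_of_tendsto_mul (tendsto_const_nhds.congr' ?_) hkd
    filter_upwards [eventually_ne_atTop 0] with θ hθ
    field_simp
  have hlim := ((tendsto_gammaCDF_div_pow (by omega : d ≠ 0)).comp hcθ).mul hpow
  have hval : (d.factorial : ℝ)⁻¹ * (if d = k then c ^ k else 0) =
      if d = k then max c 0 ^ k / k.factorial else 0 := by
    split_ifs with h
    · rw [h, max_eq_left hc.le, inv_mul_eq_div]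
    · rw [mul_zero]
  rw [← hval]
  refine hlim.congr' ?_
  filter_upwards [eventually_gt_atTop 0] with θ hθ
  have : (c / θ) ^ d ≠ 0 := by positivity
  simp only [Function.comp_apply]
  field_simp

theorem gammaCDF_ratio_limit_general (n d d0 ν : ℕ) (h1 : 1 ≤ d0) (h2 : d0 ≤ d) (h3 : d ≤ n)
    (T : ℝ) (hT : 0 < T) (y : ℝ) :
    Tendsto (fun θ : ℝ =>
        gammaCDF ((d * y - ((n:ℝ) - d + ν) * T) / θ) d / probDge n d0 T θ) atTop
      (nhds (if d = d0 then
          ((Nat.factorial (n - d0) : ℝ) / (Nat.factorial n)) *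
            (max ((d0:ℝ) * y - ((n:ℝ) - d0 + ν) * T) 0) ^ d0 / T ^ d0
        else 0)) := by
  have hd0n : d0 ≤ n := h2.trans h3
  have hden : (n.choose d0 : ℝ) * T ^ d0 ≠ 0 := by
    have := Nat.choose_pos hd0n
    positivity
  have hlim := (tendsto_pow_mul_gammaCDF_div (by omega) h2 (d * y - ((n:ℝ) - d + ν) * T)).div
    (tendsto_pow_mul_probDge hd0n T) hden
  convert hlim.congr' ?_ using 2
  · split_ifs with h
    · subst h
      rw [Nat.cast_choose ℝ h3]
      field_simp
    · rw [zero_div]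
  · filter_upwards [eventually_gt_atTop 0] with θ hθ
    exact mul_div_mul_left _ _ (by positivity)

/-- Lemma 2: the limit as θ → ∞ of G({dy − (n−d+ν)T}/θ ; d)/P_θ(D ≥ d₀) is 0 when
d > d₀ and ((n−d₀)!/n!)·(d₀y − (n−d₀+ν)T)₊^{d₀}/T^{d₀} when d = d₀. -/
theorem gammaCDF_ratio_limit (n d d0 ν : ℕ) (h1 : 1 ≤ d0) (h2 : d0 ≤ d) (h3 : d ≤ n)
    (hν : ν ≤ d) (T : ℝ) (hT : 0 < T) (y : ℝ) (hy : 0 < y) :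
    Tendsto (fun θ : ℝ =>
        gammaCDF ((d * y - ((n:ℝ) - d + ν) * T) / θ) d / probDge n d0 T θ) atTop
      (nhds (if d = d0 then
          ((Nat.factorial (n - d0) : ℝ) / (Nat.factorial n)) *
            (max ((d0:ℝ) * y - ((n:ℝ) - d0 + ν) * T) 0) ^ d0 / T ^ d0
        else 0)) :=
  gammaCDF_ratio_limit_general n d d0 ν h1 h2 h3 T hT y
end

section
/- For any integer 1 ≤ d₀ ≤ n and all y > 0, the conditional CDF F(y;θ | D ≥ d₀) of the MLE under type-I censoring tends to 1 as θ ↓ 0. -/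
open Filter Set

/-- The conditional CDF F(y;θ | D ≥ d₀) of the MLE of the exponential mean under
type-I censoring at time T with n items (Bartholomew's formula). -/
noncomputable def condCDF_MLE (n d0 : ℕ) (T y θ : ℝ) : ℝ :=
  (∑ d ∈ Finset.Icc d0 n, ∑ ν ∈ Finset.range (d + 1),
      (-1:ℝ) ^ ν * (n.choose d) * (d.choose ν) * Real.exp (-(((n:ℝ) - d + ν)) * T / θ) *
        gammaCDF ((d * y - ((n:ℝ) - d + ν) * T) / θ) d) / probDge n d0 T θ

/-! As θ ↓ 0 every item fails before T with probability tending to 1, so P_θ(D ≥ d₀) → 1.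
In Bartholomew's sum every term with n − d + ν > 0 carries the factor e^{−(n−d+ν)T/θ} → 0
against a gamma CDF bounded by 1, which leaves only the term d = n, ν = 0, namely
G(ny/θ; n) → 1. -/

open MeasureTheory Topology
open scoped Nat

lemma integrableOn_pow_mul_exp_neg_Ioi (k : ℕ) :
    IntegrableOn (fun u : ℝ => u ^ k * Real.exp (-u)) (Ioi 0) := by
  refine (Real.GammaIntegral_convergent (s := k + 1) (by positivity)).congr_fun
    (fun u _ => ?_) measurableSet_Ioi
  simp only [add_sub_cancel_right, Real.rpow_natCast, mul_comm]

lemma integral_pow_mul_exp_neg_Ioi (k : ℕ) :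
    ∫ u in Ioi (0:ℝ), u ^ k * Real.exp (-u) = k ! := by
  rw [← Real.Gamma_nat_eq_factorial, Real.Gamma_eq_integral (by positivity)]
  refine setIntegral_congr_fun measurableSet_Ioi fun u _ => ?_
  simp only [add_sub_cancel_right, Real.rpow_natCast, mul_comm]

lemma gammaCDF_nonneg (x : ℝ) (d : ℕ) : 0 ≤ gammaCDF x d :=
  div_nonneg (intervalIntegral.integral_nonneg (le_max_right x 0)
    fun _ hu => mul_nonneg (pow_nonneg hu.1 _) (Real.exp_nonneg _)) (Nat.cast_nonneg _)

lemma gammaCDF_le_one (x : ℝ) (d : ℕ) : gammaCDF x d ≤ 1 := by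
  rw [gammaCDF, div_le_one (by positivity), ← integral_pow_mul_exp_neg_Ioi,
    intervalIntegral.integral_of_le (le_max_right x 0)]
  refine setIntegral_mono_set (integrableOn_pow_mul_exp_neg_Ioi _) ?_
    Ioc_subset_Ioi_self.eventuallyLE
  filter_upwards [ae_restrict_mem measurableSet_Ioi] with u hu
  exact mul_nonneg (pow_nonneg (le_of_lt hu) _) (Real.exp_nonneg _)

lemma tendsto_gammaCDF_atTop (d : ℕ) : Tendsto (gammaCDF · d) atTop (𝓝 1) := by
  have h := (intervalIntegral_tendsto_integral_Ioi 0 (integrableOn_pow_mul_exp_neg_Ioi (d - 1))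
    tendsto_id).div_const ((d - 1)! : ℝ)
  rw [integral_pow_mul_exp_neg_Ioi, div_self (by positivity)] at h
  refine h.congr' ?_
  filter_upwards [eventually_ge_atTop 0] with x hx
  rw [gammaCDF, max_eq_left hx, id]

lemma tendsto_exp_neg_div_nhdsGT_zero {a : ℝ} (ha : 0 < a) :
    Tendsto (fun θ => Real.exp (-a / θ)) (𝓝[>] 0) (𝓝 0) := by
  refine Real.tendsto_exp_atBot.comp ?_
  exact (tendsto_inv_nhdsGT_zero.const_mul_atTop_of_neg (neg_neg_of_pos ha)).congr
    fun θ => (div_eq_mul_inv _ θ).symm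

lemma Filter.Tendsto.finset_sum_of_forall_ne_tendsto_zero {ι α M : Type*} [DecidableEq ι]
    [AddCommMonoid M] [TopologicalSpace M] [ContinuousAdd M]
    {l : Filter α} {s : Finset ι} {f : ι → α → M} {i₀ : ι} {c : M} (hi₀ : i₀ ∈ s)
    (h₀ : Tendsto (f i₀) l (𝓝 c)) (h : ∀ i ∈ s, i ≠ i₀ → Tendsto (f i) l (𝓝 0)) :
    Tendsto (fun a => ∑ i ∈ s, f i a) l (𝓝 c) := by
  simp_rw [← Finset.add_sum_erase s _ hi₀]
  simpa using h₀.add (tendsto_finsetSum _ fun i hi => h i (Finset.mem_of_mem_erase hi)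
    (Finset.ne_of_mem_erase hi))

noncomputable def bartholomewTerm (n d ν : ℕ) (T y θ : ℝ) : ℝ :=
  (-1:ℝ) ^ ν * (n.choose d) * (d.choose ν) * Real.exp (-(((n:ℝ) - d + ν)) * T / θ) *
    gammaCDF ((d * y - ((n:ℝ) - d + ν) * T) / θ) d

section Limits

variable {n : ℕ} {T : ℝ}

lemma tendsto_bartholomewTerm_zero {d ν : ℕ} (y : ℝ) (hT : 0 < T) (hc : 0 < (n:ℝ) - d + ν) :
    Tendsto (bartholomewTerm n d ν T y) (𝓝[>] 0) (𝓝 0) := by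
  have hexp : Tendsto (fun θ => (-1:ℝ) ^ ν * (n.choose d) * (d.choose ν) *
      Real.exp (-(((n:ℝ) - d + ν)) * T / θ)) (𝓝[>] 0) (𝓝 0) := by
    simpa only [neg_mul, mul_zero] using
      (tendsto_exp_neg_div_nhdsGT_zero (mul_pos hc hT)).const_mul ((-1:ℝ) ^ ν * _ * _)
  refine hexp.zero_mul_isBoundedUnder_le (isBoundedUnder_of ⟨1, fun θ => ?_⟩)
  rw [Function.comp_apply, Real.norm_of_nonneg (gammaCDF_nonneg _ _)]
  exact gammaCDF_le_one _ _

lemma tendsto_bartholomewTerm_self_zero {y : ℝ} (hn : 0 < n) (hy : 0 < y) :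
    Tendsto (bartholomewTerm n n 0 T y) (𝓝[>] 0) (𝓝 1) := by
  have harg : Tendsto (fun θ : ℝ => n * y / θ) (𝓝[>] 0) atTop := by
    simpa only [div_eq_mul_inv] using
      tendsto_inv_nhdsGT_zero.const_mul_atTop (mul_pos (Nat.cast_pos.mpr hn) hy)
  refine ((tendsto_gammaCDF_atTop n).comp harg).congr fun θ => ?_
  simp [bartholomewTerm]

lemma tendsto_sum_bartholomewTerm {d0 : ℕ} {y : ℝ} (hn : 0 < n) (hd0 : d0 ≤ n) (hT : 0 < T)
    (hy : 0 < y) :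
    Tendsto (fun θ => ∑ d ∈ Finset.Icc d0 n, ∑ ν ∈ Finset.range (d + 1),
      bartholomewTerm n d ν T y θ) (𝓝[>] 0) (𝓝 1) := by
  refine .finset_sum_of_forall_ne_tendsto_zero (Finset.mem_Icc.mpr ⟨hd0, le_rfl⟩) ?_ ?_
  · refine .finset_sum_of_forall_ne_tendsto_zero (Finset.mem_range.mpr n.succ_pos)
      (tendsto_bartholomewTerm_self_zero hn hy) fun ν _ hν => ?_
    exact tendsto_bartholomewTerm_zero y hT (by simpa using Nat.pos_of_ne_zero hν)
  · intro d hd hdn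
    have hdn : (d:ℝ) < n := Nat.cast_lt.mpr (lt_of_le_of_ne (Finset.mem_Icc.mp hd).2 hdn)
    simpa using tendsto_finsetSum _ fun ν _ =>
      tendsto_bartholomewTerm_zero y hT (by linarith [ν.cast_nonneg (α := ℝ)])

lemma tendsto_probDge {d0 : ℕ} (hd0 : d0 ≤ n) (hT : 0 < T) :
    Tendsto (probDge n d0 T) (𝓝[>] 0) (𝓝 1) := by
  have hsurv : ∀ j : ℕ, Tendsto (fun θ => (1 - Real.exp (-T / θ)) ^ j) (𝓝[>] 0) (𝓝 1) := by
    intro j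
    simpa using ((tendsto_exp_neg_div_nhdsGT_zero hT).const_sub 1).pow j
  refine .finset_sum_of_forall_ne_tendsto_zero (Finset.mem_Icc.mpr ⟨hd0, le_rfl⟩)
    (by simpa using hsurv n) fun j hj hjn => ?_
  have hjn : (j:ℝ) < n := Nat.cast_lt.mpr (lt_of_le_of_ne (Finset.mem_Icc.mp hj).2 hjn)
  have hcens := tendsto_exp_neg_div_nhdsGT_zero (mul_pos (sub_pos.mpr hjn) hT)
  simpa only [neg_mul, mul_one, mul_zero] using ((hsurv j).const_mul (n.choose j : ℝ)).mul hcens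

end Limits

/-- For 1 ≤ d₀ ≤ n and all y > 0, F(y;θ | D ≥ d₀) → 1 as θ ↓ 0. -/
theorem condCDF_MLE_tendsto_one (n d0 : ℕ) (h1 : 1 ≤ d0) (h2 : d0 ≤ n)
    (T : ℝ) (hT : 0 < T) (y : ℝ) (hy : 0 < y) :
    Tendsto (fun θ : ℝ => condCDF_MLE n d0 T y θ) (nhdsWithin 0 (Set.Ioi 0)) (nhds 1) := by
  have h := (tendsto_sum_bartholomewTerm (h1.trans h2) h2 hT hy).div
    (tendsto_probDge h2 hT) one_ne_zero
  rwa [div_one] at h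
end

section
/- The function y ↦ Σ_{ν=0}^{d₀−1} (−1)^ν (max{d₀y − (n−d₀+ν)T, 0})^{d₀} / (ν!(d₀−ν)! T^{d₀}) is continuous and strictly increasing on ((n−d₀)T/d₀, nT/d₀), tends to 0 as y ↓ (n−d₀)T/d₀ and to 1 as y ↑ nT/d₀; hence it takes every value in (0,1) on this interval. -/
/-!
The substitution `x = (d₀y − (n−d₀)T)/T` maps the interval onto `(0, d₀)` and turns the sum into
the Irwin–Hall distribution function `F_d(x) = (1/d!) Σ_{ν ≤ d} (−1)^ν C(d,ν) (x−ν)₊^d` (of a sum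
of `d` independent uniform variables on `[0,1]`) at `d = d₀`; its term `ν = d₀` vanishes for
`x ≤ d₀`. Integrating `(c−u)₊^e` termwise and Pascal's rule give `F_{e+1}(x) = ∫₀¹ F_e(x−u) du`.
Starting from `F_1(x) = min (max x 0) 1`, induction along this identity shows that `F_d = 1` on
`[d, ∞)` and that `F_d` is strictly increasing on `[0, d]`, the integrand `F_e(b−u) − F_e(a−u)`
being nonnegative and positive at `u = 0` or `u = 1`. This replaces the Stirling-number identity
at the right endpoint; continuity gives the endpoint limits and the intermediate value theorem
the rest.
-/

open Filter Set

noncomputable def limitSum (n d0 : ℕ) (T y : ℝ) : ℝ :=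
  ∑ ν ∈ Finset.range d0,
    (-1:ℝ) ^ ν * (max ((d0:ℝ) * y - ((n:ℝ) - d0 + ν) * T) 0) ^ d0 /
      ((Nat.factorial ν) * (Nat.factorial (d0 - ν)) * T ^ d0)

open Finset Topology Nat

theorem hasDerivAt_max_zero_pow {m : ℕ} (hm : m ≠ 0) (t : ℝ) :
    HasDerivAt (fun s : ℝ => max s 0 ^ (m + 1)) ((m + 1) * max t 0 ^ m) t := by
  have off_zero : ∀ t ≠ 0,
      HasDerivAt (fun s : ℝ => max s 0 ^ (m + 1)) ((m + 1) * max t 0 ^ m) t := by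
    intro t ht
    rcases ht.lt_or_gt with ht | ht
    · have hzero : (fun s : ℝ => max s 0 ^ (m + 1)) =ᶠ[𝓝 t] fun _ => 0 := by
        filter_upwards [eventually_lt_nhds ht] with s hs
        simp [max_eq_right hs.le]
      simpa [max_eq_right ht.le, hm] using (hasDerivAt_const t (0:ℝ)).congr_of_eventuallyEq hzero
    · have hpow : (fun s : ℝ => max s 0 ^ (m + 1)) =ᶠ[𝓝 t] fun s => s ^ (m + 1) := by
        filter_upwards [eventually_gt_nhds ht] with s hs
        rw [max_eq_left hs.le]
      simpa [max_eq_left ht.le] using (hasDerivAt_pow (m + 1) t).congr_of_eventuallyEq hpow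
  rcases eq_or_ne t 0 with rfl | ht
  · exact hasDerivAt_of_hasDerivAt_of_ne off_zero (by fun_prop) (by fun_prop)
  · exact off_zero t ht

theorem integral_max_sub_zero_pow {m : ℕ} (hm : m ≠ 0) (a b c : ℝ) :
    ∫ u in a..b, max (c - u) 0 ^ m
      = (max (c - a) 0 ^ (m + 1) - max (c - b) 0 ^ (m + 1)) / (m + 1) := by
  have hderiv : ∀ u ∈ uIcc a b, HasDerivAt (fun u : ℝ => -max (c - u) 0 ^ (m + 1) / (m + 1))
      (max (c - u) 0 ^ m) u := by
    intro u _
    refine (((hasDerivAt_max_zero_pow hm (c - u)).comp u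
      ((hasDerivAt_id u).const_sub c)).neg.div_const _).congr_deriv ?_
    field_simp
  rw [intervalIntegral.integral_eq_sub_of_hasDerivAt hderiv
    (Continuous.intervalIntegrable (by fun_prop) a b)]
  ring

noncomputable def irwinHallCDF (d : ℕ) (x : ℝ) : ℝ :=
  (∑ ν ∈ range (d + 1), (-1) ^ ν * d.choose ν * max (x - ν) 0 ^ d) / d !

@[fun_prop]
theorem continuous_irwinHallCDF (d : ℕ) : Continuous (irwinHallCDF d) := by
  unfold irwinHallCDF
  fun_prop

theorem irwinHallCDF_of_nonpos {d : ℕ} (hd : d ≠ 0) {x : ℝ} (hx : x ≤ 0) :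
    irwinHallCDF d x = 0 := by
  refine div_eq_zero_iff.2 (Or.inl (sum_eq_zero fun ν _ => ?_))
  rw [max_eq_right (by linarith [ν.cast_nonneg (α := ℝ)]), zero_pow hd, mul_zero]

theorem irwinHallCDF_one (x : ℝ) : irwinHallCDF 1 x = max x 0 - max (x - 1) 0 := by
  simp [irwinHallCDF, sum_range_succ, sub_eq_add_neg]

theorem irwinHallCDF_succ {e : ℕ} (he : e ≠ 0) (x : ℝ) :
    irwinHallCDF (e + 1) x = ∫ u in (0:ℝ)..1, irwinHallCDF e (x - u) := by
  set b : ℕ → ℝ := fun ν => max (x - ν) 0 ^ (e + 1)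
  have pascal : ∑ ν ∈ range (e + 2), (-1) ^ ν * ((e + 1).choose ν : ℝ) * b ν
      = ∑ ν ∈ range (e + 1), (-1) ^ ν * (e.choose ν : ℝ) * (b ν - b (ν + 1)) := by
    have := Finset.sum_choose_succ_mul (fun ν _ => (-1 : ℝ) ^ ν * b ν) e
    simp only [← mul_assoc, mul_comm _ ((-1 : ℝ) ^ _)] at this
    rw [this, ← sum_add_distrib]
    refine sum_congr rfl fun ν _ => ?_
    ring
  have integral_term : ∀ ν : ℕ, ∫ u in (0:ℝ)..1, (-1) ^ ν * (e.choose ν : ℝ) * max (x - u - ν) 0 ^ e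
      = (-1) ^ ν * e.choose ν * (b ν - b (ν + 1)) / (e + 1) := by
    intro ν
    simp_rw [sub_right_comm x _ (ν : ℝ)]
    rw [intervalIntegral.integral_const_mul, integral_max_sub_zero_pow he]
    simp only [b]
    push_cast
    ring_nf
  unfold irwinHallCDF
  rw [intervalIntegral.integral_div, intervalIntegral.integral_finsetSum
    (fun ν _ => Continuous.intervalIntegrable (by fun_prop) _ _)]
  simp_rw [integral_term, ← sum_div]
  rw [pascal, Nat.factorial_succ]
  push_cast
  field_simp

theorem irwinHallCDF_of_le {d : ℕ} (hd : d ≠ 0) {x : ℝ} (hx : d ≤ x) : irwinHallCDF d x = 1 := by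
  induction d generalizing x with
  | zero => exact absurd rfl hd
  | succ e ih =>
    rcases eq_or_ne e 0 with rfl | he
    · simp only [Nat.cast_one, zero_add] at hx
      rw [irwinHallCDF_one, max_eq_left (by linarith), max_eq_left (by linarith)]
      ring
    · rw [irwinHallCDF_succ he, intervalIntegral.integral_congr (g := fun _ => 1)]
      · simp
      · intro u hu
        rw [Set.uIcc_of_le zero_le_one] at hu
        exact ih he (by push_cast at hx; linarith [hu.2])

theorem irwinHallCDF_lt_irwinHallCDF {d : ℕ} (hd : d ≠ 0) {a b : ℝ} (hab : a < b) (ha : a < d)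
    (hb : 0 < b) : irwinHallCDF d a < irwinHallCDF d b := by
  induction d generalizing a b with
  | zero => exact absurd rfl hd
  | succ e ih =>
    rcases eq_or_ne e 0 with rfl | he
    · simp only [irwinHallCDF_one, max_def, Nat.cast_one, zero_add] at ha ⊢
      split_ifs <;> linarith
    have hmono : Monotone (irwinHallCDF e) := by
      intro a' b' hab'
      rcases hab'.eq_or_lt with rfl | hlt
      · rfl
      rcases le_or_gt b' 0 with hb' | hb'
      · rw [irwinHallCDF_of_nonpos he hb', irwinHallCDF_of_nonpos he (hab'.trans hb')]
      rcases le_or_gt (e : ℝ) a' with ha' | ha'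
      · rw [irwinHallCDF_of_le he ha', irwinHallCDF_of_le he (ha'.trans hab')]
      exact (ih he hlt ha' hb').le
    have hcont : Continuous fun u => irwinHallCDF e (b - u) - irwinHallCDF e (a - u) := by
      fun_prop
    have hpos : ∃ u ∈ Icc (0:ℝ) 1, 0 < irwinHallCDF e (b - u) - irwinHallCDF e (a - u) := by
      push_cast at ha
      rcases lt_or_ge a e with hae | hae
      · exact ⟨0, by simp, by simpa using ih he hab hae hb⟩
      · refine ⟨1, by simp, sub_pos.2 (ih he (by linarith) (by linarith) ?_)⟩
        linarith [(Nat.one_le_cast (α := ℝ)).2 (Nat.one_le_iff_ne_zero.2 he)]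
    have hint := intervalIntegral.integral_pos zero_lt_one hcont.continuousOn
      (fun u _ => sub_nonneg.2 (hmono (by linarith))) hpos
    rw [intervalIntegral.integral_sub (Continuous.intervalIntegrable (by fun_prop) _ _)
      (Continuous.intervalIntegrable (by fun_prop) _ _)] at hint
    rw [irwinHallCDF_succ he, irwinHallCDF_succ he]
    linarith

theorem limitSum_eq_irwinHallCDF {n d0 : ℕ} (hd : d0 ≠ 0) {T : ℝ} (hT : 0 < T) {y : ℝ}
    (hy : d0 * y ≤ n * T) :
    limitSum n d0 T y = irwinHallCDF d0 ((d0 * y - (n - d0) * T) / T) := by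
  have hx : (d0 * y - (n - d0) * T) / T - d0 ≤ 0 := by
    rw [sub_nonpos, div_le_iff₀ hT]
    linarith
  unfold limitSum irwinHallCDF
  rw [sum_range_succ, max_eq_right hx, zero_pow hd, mul_zero, add_zero, sum_div]
  refine sum_congr rfl fun ν hν => ?_
  have hfact : (d0.choose ν * ν ! * (d0 - ν)! : ℝ) = d0 ! := by
    exact_mod_cast Nat.choose_mul_factorial_mul_factorial (mem_range.1 hν).le
  have hshift : (d0 * y - (n - d0) * T) / T - ν = (d0 * y - (n - d0 + ν) * T) / T := by
    field_simp
    ring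
  have hchoose : (d0.choose ν : ℝ) ≠ 0 :=
    Nat.cast_ne_zero.2 (Nat.choose_pos (mem_range.1 hν).le).ne'
  rw [hshift, ← zero_div T, max_div_div_right hT.le, zero_div, div_pow, ← hfact]
  field_simp

theorem continuous_limitSum (n d0 : ℕ) (T : ℝ) : Continuous (limitSum n d0 T) := by
  unfold limitSum
  fun_prop

theorem limitSum_bijective_onto_unit_interval_general (n d0 : ℕ) (h1 : 1 ≤ d0)
    (T : ℝ) (hT : 0 < T) :
    StrictMonoOn (limitSum n d0 T) (Set.Ioo (((n:ℝ) - d0) * T / d0) ((n:ℝ) * T / d0)) ∧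
    ContinuousOn (limitSum n d0 T) (Set.Ioo (((n:ℝ) - d0) * T / d0) ((n:ℝ) * T / d0)) ∧
    Tendsto (limitSum n d0 T)
      (nhdsWithin (((n:ℝ) - d0) * T / d0) (Set.Ioi (((n:ℝ) - d0) * T / d0))) (nhds 0) ∧
    Tendsto (limitSum n d0 T)
      (nhdsWithin ((n:ℝ) * T / d0) (Set.Iio ((n:ℝ) * T / d0))) (nhds 1) ∧
    ∀ c ∈ Set.Ioo (0:ℝ) 1,
      ∃ y ∈ Set.Ioo (((n:ℝ) - d0) * T / d0) ((n:ℝ) * T / d0), limitSum n d0 T y = c := by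
  have hd : d0 ≠ 0 := Nat.one_le_iff_ne_zero.1 h1
  have hd' : (0 : ℝ) < d0 := by exact_mod_cast h1
  set a := ((n:ℝ) - d0) * T / d0
  set b := (n:ℝ) * T / d0
  set x : ℝ → ℝ := fun y => (d0 * y - (n - d0) * T) / T
  have hx : StrictMono x := fun y₁ y₂ h => by
    simp only [x]
    gcongr
  have hxa : x a = 0 := by simp only [x, a]; field_simp; ring
  have hxb : x b = d0 := by simp only [x, b]; field_simp; ring
  have hab : a < b := hx.lt_iff_lt.1 (by rw [hxa, hxb]; exact hd')
  have hlimit : ∀ y ≤ b, limitSum n d0 T y = irwinHallCDF d0 (x y) := fun y hy =>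
    limitSum_eq_irwinHallCDF hd hT (by rwa [le_div_iff₀ hd', mul_comm] at hy)
  have hla : limitSum n d0 T a = 0 := by rw [hlimit a hab.le, hxa, irwinHallCDF_of_nonpos hd le_rfl]
  have hlb : limitSum n d0 T b = 1 := by rw [hlimit b le_rfl, hxb, irwinHallCDF_of_le hd le_rfl]
  have hcont := continuous_limitSum n d0 T
  refine ⟨fun y₁ hy₁ y₂ hy₂ h => ?_, hcont.continuousOn, ?_, ?_, fun c hc => ?_⟩
  · rw [hlimit y₁ hy₁.2.le, hlimit y₂ hy₂.2.le]
    exact irwinHallCDF_lt_irwinHallCDF hd (hx h) (hxb ▸ hx hy₁.2) (hxa ▸ hx hy₂.1)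
  · exact hla ▸ hcont.continuousAt.tendsto.mono_left nhdsWithin_le_nhds
  · exact hlb ▸ hcont.continuousAt.tendsto.mono_left nhdsWithin_le_nhds
  · exact intermediate_value_Ioo hab.le hcont.continuousOn (by rwa [hla, hlb])

/-- The limiting sum is continuous and strictly increasing on ((n−d₀)T/d₀, nT/d₀),
tends to 0 at the left endpoint and to 1 at the right endpoint, and hence takes
every value in (0,1) on this interval. -/
theorem limitSum_bijective_onto_unit_interval (n d0 : ℕ) (h1 : 1 ≤ d0) (h2 : d0 ≤ n)
    (T : ℝ) (hT : 0 < T) :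
    StrictMonoOn (limitSum n d0 T) (Set.Ioo (((n:ℝ) - d0) * T / d0) ((n:ℝ) * T / d0)) ∧
    ContinuousOn (limitSum n d0 T) (Set.Ioo (((n:ℝ) - d0) * T / d0) ((n:ℝ) * T / d0)) ∧
    Tendsto (limitSum n d0 T)
      (nhdsWithin (((n:ℝ) - d0) * T / d0) (Set.Ioi (((n:ℝ) - d0) * T / d0))) (nhds 0) ∧
    Tendsto (limitSum n d0 T)
      (nhdsWithin ((n:ℝ) * T / d0) (Set.Iio ((n:ℝ) * T / d0))) (nhds 1) ∧
    ∀ c ∈ Set.Ioo (0:ℝ) 1,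
      ∃ y ∈ Set.Ioo (((n:ℝ) - d0) * T / d0) ((n:ℝ) * T / d0), limitSum n d0 T y = c :=
  limitSum_bijective_onto_unit_interval_general n d0 h1 T hT
end

section
/- For the standard normal baseline F₀ = Φ and finite truncation points T₁ < T₂, the truncated location-family CDF F(y;θ) = {Φ(y−θ) − Φ(T₁−θ)}/{Φ(T₂−θ) − Φ(T₁−θ)} satisfies lim_{θ→∞} F(y;θ) = 0 and lim_{θ→−∞} F(y;θ) = 1 for every y ∈ (T₁,T₂). -/
open Filter

/-- The standard normal CDF. -/
noncomputable def stdNormalCDF (x : ℝ) : ℝ :=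
  ∫ t in Set.Iic x, Real.exp (-(t ^ 2) / 2) / Real.sqrt (2 * Real.pi)

open Real MeasureTheory Set Topology

/-!
Write `Φ = stdNormalCDF` and `φ = stdNormalPDF`. For `c ≤ 0` the density ratio
`φ(t + c) / φ(t) = exp (-c t - c² / 2)` is increasing in `t`, so integrating over `t ≤ x` gives
`Φ(x + c) ≤ exp (-c x - c² / 2) Φ(x)`; for `c < 0` the factor tends to `0` as `x → -∞`, so
`Φ(x + c)` is negligible against `Φ(x)`.

As `θ → ∞`, with `x = T₂ - θ`, the numerator and the subtracted term of the denominator of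
`F(y; θ)` are `Φ` at `x` shifted by the negative amounts `y - T₂` and `T₁ - T₂`, so `F → 0`.
As `θ → -∞`, the symmetry `Φ(-x) = 1 - Φ(x)` turns `F(y; θ)` into
`(Φ(x) - Φ(x + T₁ - y)) / (Φ(x) - Φ(x + T₁ - T₂))` with `x = θ - T₁`, which tends to `1`.
-/

section RatioLimits

variable {α : Type*} {l : Filter α} {u v w : α → ℝ}

theorem tendsto_sub_div_sub_zero (hu : Tendsto (fun x => u x / w x) l (𝓝 0))
    (hv : Tendsto (fun x => v x / w x) l (𝓝 0)) (hw : ∀ᶠ x in l, w x ≠ 0) :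
    Tendsto (fun x => (u x - v x) / (w x - v x)) l (𝓝 0) := by
  have h : Tendsto (fun x => (u x / w x - v x / w x) / (1 - v x / w x)) l
      (𝓝 ((0 - 0) / (1 - 0))) :=
    (hu.sub hv).div (tendsto_const_nhds.sub hv) (by norm_num)
  rw [sub_zero, zero_div] at h
  refine h.congr' ?_
  filter_upwards [hw] with x hx
  rw [← sub_div, one_sub_div hx, div_div_div_cancel_right₀ hx]

theorem tendsto_sub_div_sub_one (hu : Tendsto (fun x => u x / w x) l (𝓝 0))
    (hv : Tendsto (fun x => v x / w x) l (𝓝 0)) (hw : ∀ᶠ x in l, w x ≠ 0) :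
    Tendsto (fun x => (w x - u x) / (w x - v x)) l (𝓝 1) := by
  have h : Tendsto (fun x => (1 - u x / w x) / (1 - v x / w x)) l (𝓝 ((1 - 0) / (1 - 0))) :=
    (tendsto_const_nhds.sub hu).div (tendsto_const_nhds.sub hv) (by norm_num)
  rw [sub_zero, div_one] at h
  refine h.congr' ?_
  filter_upwards [hw] with x hx
  rw [one_sub_div hx, one_sub_div hx, div_div_div_cancel_right₀ hx]

end RatioLimits

noncomputable def stdNormalPDF (t : ℝ) : ℝ := exp (-(t ^ 2) / 2) / √(2 * π)

theorem stdNormalCDF_eq_integral (x : ℝ) : stdNormalCDF x = ∫ t in Iic x, stdNormalPDF t := rfl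

theorem stdNormalPDF_pos (t : ℝ) : 0 < stdNormalPDF t := by
  unfold stdNormalPDF; positivity

theorem stdNormalPDF_add (t c : ℝ) :
    stdNormalPDF (t + c) = exp (-(c * t) - c ^ 2 / 2) * stdNormalPDF t := by
  rw [stdNormalPDF, stdNormalPDF, mul_div_assoc', ← exp_add]
  ring_nf

theorem integrable_stdNormalPDF : Integrable stdNormalPDF := by
  convert (integrable_exp_neg_mul_sq (b := 1 / 2) (by norm_num)).div_const √(2 * π) using 3
  rw [stdNormalPDF]; ring_nf

theorem integral_stdNormalPDF : ∫ t, stdNormalPDF t = 1 := by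
  have h (t : ℝ) : -(t ^ 2) / 2 = -(1 / 2) * t ^ 2 := by ring
  simp_rw [stdNormalPDF, integral_div, h, integral_gaussian]
  rw [show π / (1 / 2) = 2 * π by ring, div_self (by positivity)]

theorem stdNormalCDF_pos (x : ℝ) : 0 < stdNormalCDF x := by
  rw [stdNormalCDF_eq_integral, setIntegral_pos_iff_support_of_nonneg_ae
    (ae_of_all _ fun t => (stdNormalPDF_pos t).le) integrable_stdNormalPDF.integrableOn,
    (Function.support_eq_univ fun t => (stdNormalPDF_pos t).ne'), univ_inter, volume_Iic]
  exact ENNReal.zero_lt_top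

theorem stdNormalCDF_add (x c : ℝ) :
    stdNormalCDF (x + c) = ∫ t in Iic x, stdNormalPDF (t + c) := by
  rw [stdNormalCDF_eq_integral, ← (measurePreserving_add_right volume c).setIntegral_preimage_emb
    (measurableEmbedding_addRight c), preimage_add_const_Iic, add_sub_cancel_right]

theorem stdNormalCDF_add_le {c : ℝ} (hc : c ≤ 0) (x : ℝ) :
    stdNormalCDF (x + c) ≤ exp (-(c * x) - c ^ 2 / 2) * stdNormalCDF x := by
  rw [stdNormalCDF_add, stdNormalCDF_eq_integral, ← integral_const_mul]
  refine setIntegral_mono_on (integrable_stdNormalPDF.comp_add_right c).integrableOn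
    (integrable_stdNormalPDF.integrableOn.const_mul _) measurableSet_Iic fun t ht => ?_
  rw [stdNormalPDF_add]
  refine mul_le_mul_of_nonneg_right (exp_le_exp.2 ?_) (stdNormalPDF_pos t).le
  nlinarith [mem_Iic.1 ht]

theorem tendsto_stdNormalCDF_add_div_atBot {c : ℝ} (hc : c < 0) :
    Tendsto (fun x => stdNormalCDF (x + c) / stdNormalCDF x) atBot (𝓝 0) := by
  have hbound : Tendsto (fun x => exp (-(c * x) - c ^ 2 / 2)) atBot (𝓝 0) := by
    refine tendsto_exp_atBot.comp (tendsto_atBot_add_const_right _ (-(c ^ 2 / 2)) ?_)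
    simpa [neg_mul] using tendsto_id.const_mul_atBot (neg_pos.2 hc)
  refine tendsto_of_tendsto_of_tendsto_of_le_of_le tendsto_const_nhds hbound
    (fun x => div_nonneg (stdNormalCDF_pos _).le (stdNormalCDF_pos x).le) fun x => ?_
  exact (div_le_iff₀ (stdNormalCDF_pos x)).2 (stdNormalCDF_add_le hc.le x)

theorem stdNormalPDF_neg (t : ℝ) : stdNormalPDF (-t) = stdNormalPDF t := by
  rw [stdNormalPDF, stdNormalPDF, neg_sq]

theorem stdNormalCDF_neg (x : ℝ) : stdNormalCDF (-x) = 1 - stdNormalCDF x := by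
  have hupper : stdNormalCDF (-x) = ∫ t in Ioi x, stdNormalPDF t := by
    simp_rw [stdNormalCDF_eq_integral, ← integral_comp_neg_Ioi, stdNormalPDF_neg]
  rw [hupper, eq_sub_iff_add_eq', ← integral_stdNormalPDF, stdNormalCDF_eq_integral,
    intervalIntegral.integral_Iic_add_Ioi integrable_stdNormalPDF.integrableOn
      integrable_stdNormalPDF.integrableOn]

theorem truncated_normal_limits_general (T₁ T₂ : ℝ)
    (y : ℝ) (hy : y ∈ Set.Ioo T₁ T₂) :
    Tendsto (fun θ => (stdNormalCDF (y - θ) - stdNormalCDF (T₁ - θ)) /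
        (stdNormalCDF (T₂ - θ) - stdNormalCDF (T₁ - θ))) atTop (nhds 0) ∧
    Tendsto (fun θ => (stdNormalCDF (y - θ) - stdNormalCDF (T₁ - θ)) /
        (stdNormalCDF (T₂ - θ) - stdNormalCDF (T₁ - θ))) atBot (nhds 1) := by
  obtain ⟨hy₁, hy₂⟩ := hy
  have hΦ : ∀ᶠ x in atBot, stdNormalCDF x ≠ 0 := .of_forall fun x => (stdNormalCDF_pos x).ne'
  constructor
  · have key := tendsto_sub_div_sub_zero
      (tendsto_stdNormalCDF_add_div_atBot (sub_neg.2 hy₂))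
      (tendsto_stdNormalCDF_add_div_atBot (sub_neg.2 (hy₁.trans hy₂))) hΦ
    refine (key.comp (tendsto_atBot_add_const_left _ T₂ tendsto_neg_atTop_atBot)).congr
      fun θ => ?_
    simp only [Function.comp_apply]
    ring_nf
  · have key := tendsto_sub_div_sub_one
      (tendsto_stdNormalCDF_add_div_atBot (sub_neg.2 hy₁))
      (tendsto_stdNormalCDF_add_div_atBot (sub_neg.2 (hy₁.trans hy₂))) hΦ
    refine (key.comp (tendsto_atBot_add_const_right _ (-T₁) tendsto_id)).congr fun θ => ?_
    rw [show y - θ = -(θ + -T₁ + (T₁ - y)) by ring, show T₁ - θ = -(θ + -T₁) by ring,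
      show T₂ - θ = -(θ + -T₁ + (T₁ - T₂)) by ring]
    simp only [Function.comp_apply, id, stdNormalCDF_neg]
    ring

/-- For the standard normal baseline and finite truncation points T₁ < T₂, the
truncated location-family CDF satisfies lim_{θ→∞} F(y;θ) = 0 and
lim_{θ→−∞} F(y;θ) = 1 for every y ∈ (T₁,T₂). -/
theorem truncated_normal_limits (T₁ T₂ : ℝ) (h12 : T₁ < T₂)
    (y : ℝ) (hy : y ∈ Set.Ioo T₁ T₂) :
    Tendsto (fun θ => (stdNormalCDF (y - θ) - stdNormalCDF (T₁ - θ)) /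
        (stdNormalCDF (T₂ - θ) - stdNormalCDF (T₁ - θ))) atTop (nhds 0) ∧
    Tendsto (fun θ => (stdNormalCDF (y - θ) - stdNormalCDF (T₁ - θ)) /
        (stdNormalCDF (T₂ - θ) - stdNormalCDF (T₁ - θ))) atBot (nhds 1) :=
  truncated_normal_limits_general T₁ T₂ y hy
end

section
/- Let α₁, α₂ > 0 with α₁ + α₂ = α < 1. With θ*(α,y) as in the extended pivoting method and B(α₁,α₂) = {y : θ*(1−α₁,y) < θ̄ and θ*(α₂,y) > θ̲}, the conditional coverage probability P_θ{θ*(1−α₁,Y) ≤ θ ≤ θ*(α₂,Y) | Y ∈ B(α₁,α₂)} equals (1−α)/P_θ{Y ∈ B(α₁,α₂)}, which is at least 1−α. -/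
open MeasureTheory Set Filter

open ProbabilityTheory OrderDual

/-!
For `θ ∈ Θ` the value `F(y;θ)` lies strictly between the infimum and the supremum of `F(y;·)`
over `Θ`, so strict monotonicity turns `θ*(1-α₁,y) ≤ θ ≤ θ*(α₂,y)` into
`α₂ ≤ F(y;θ) ≤ 1-α₁`. The coverage event is thus the preimage of `[α₂, 1-α₁]` under the
continuous cdf of `Y`, which has probability `1-α₁-α₂` (probability integral transform). It is
contained in `B`, and dividing by `P(B) ≤ 1` can only increase it.
-/

theorem Monotone.exists_setOf_le_eq_Iic {α β : Type*} [ConditionallyCompleteLinearOrder α]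
    [TopologicalSpace α] [OrderTopology α] [DenselyOrdered α] [NoMaxOrder α]
    [LinearOrder β] [TopologicalSpace β] [OrderClosedTopology β] {G : α → β}
    (hG : Monotone G) (hc : Continuous G) {p : β} (hlo : ∃ x, G x ≤ p) (hhi : ∃ x, p < G x) :
    ∃ b, G b = p ∧ {x | G x ≤ p} = Iic b := by
  obtain ⟨x₀, hx₀⟩ := hhi
  have hbdd : BddAbove {x | G x ≤ p} := ⟨x₀, fun x hx => (hG.reflect_lt (hx.trans_lt hx₀)).le⟩
  set b := sSup {x | G x ≤ p}
  have hb : G b ≤ p := (isClosed_le hc continuous_const).csSup_mem hlo hbdd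
  have hgt : ∀ x, b < x → p < G x := fun x hbx => not_le.mp fun hx => hbx.not_ge (le_csSup hbdd hx)
  refine ⟨b, hb.antisymm ?_, Subset.antisymm (fun x hx => le_csSup hbdd hx)
    fun x hx => (hG hx).trans hb⟩
  exact _root_.ge_of_tendsto ((hc.tendsto b).mono_left (nhdsWithin_le_nhds (s := Ioi b)))
    (eventually_nhdsWithin_of_forall fun x hx => (hgt x hx).le)

theorem Monotone.exists_setOf_lt_eq_Iio {α β : Type*} [ConditionallyCompleteLinearOrder α]
    [TopologicalSpace α] [OrderTopology α] [DenselyOrdered α] [NoMinOrder α]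
    [LinearOrder β] [TopologicalSpace β] [OrderClosedTopology β] {G : α → β}
    (hG : Monotone G) (hc : Continuous G) {p : β} (hlo : ∃ x, G x < p) (hhi : ∃ x, p ≤ G x) :
    ∃ a, G a = p ∧ {x | G x < p} = Iio a := by
  -- `{G < p}` is the complement of `{p ≤ G}`, which is an `Iic` set in the order dual.
  obtain ⟨a, ha, hS⟩ := hG.dual.exists_setOf_le_eq_Iic hc (p := toDual p) hhi hlo
  refine ⟨ofDual a, ha, ext fun x => ?_⟩
  simpa using (Set.ext_iff.mp hS (toDual x)).not

section cdf

variable (μ : Measure ℝ) [IsProbabilityMeasure μ]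

theorem measure_setOf_cdf_le_of_continuous (hc : Continuous (cdf μ)) {p : ℝ} (hp0 : 0 < p)
    (hp1 : p < 1) : μ {x | cdf μ x ≤ p} = ENNReal.ofReal p := by
  obtain ⟨b, hb, hS⟩ := (monotone_cdf μ).exists_setOf_le_eq_Iic hc
    ((tendsto_cdf_atBot μ).eventually (eventually_le_nhds hp0)).exists
    ((tendsto_cdf_atTop μ).eventually (eventually_gt_nhds hp1)).exists
  rw [hS, ← ofReal_cdf, hb]

theorem measure_setOf_cdf_lt_of_continuous (hc : Continuous (cdf μ)) {p : ℝ} (hp0 : 0 < p)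
    (hp1 : p < 1) : μ {x | cdf μ x < p} = ENNReal.ofReal p := by
  obtain ⟨a, ha, hS⟩ := (monotone_cdf μ).exists_setOf_lt_eq_Iio hc
    ((tendsto_cdf_atBot μ).eventually (eventually_lt_nhds hp0)).exists
    ((tendsto_cdf_atTop μ).eventually (eventually_ge_nhds hp1)).exists
  rw [hS, ← measure_cdf μ, (cdf μ).measure_Iio (tendsto_cdf_atBot μ),
    hc.continuousWithinAt.leftLim_eq, ha, sub_zero]

theorem measure_cdf_preimage_Icc_of_continuous (hc : Continuous (cdf μ)) {a b : ℝ} (ha : 0 < a)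
    (hab : a ≤ b) (hb : b < 1) : μ (cdf μ ⁻¹' Icc a b) = ENNReal.ofReal (b - a) := by
  have hsdiff : cdf μ ⁻¹' Icc a b = {x | cdf μ x ≤ b} \ {x | cdf μ x < a} := by
    ext x; simp [and_comm]
  have hsub : {x | cdf μ x < a} ⊆ {x | cdf μ x ≤ b} := fun x hx => hx.le.trans hab
  rw [hsdiff, measure_sdiff hsub (measurableSet_lt hc.measurable measurable_const).nullMeasurableSet
    (measure_ne_top _ _), measure_setOf_cdf_le_of_continuous μ hc (ha.trans_le hab) hb,
    measure_setOf_cdf_lt_of_continuous μ hc ha (hab.trans_lt hb), ENNReal.ofReal_sub _ ha.le]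

end cdf

theorem StrictAntiOn.csInf_image_lt_of_lt {α β : Type*} [Preorder α]
    [ConditionallyCompleteLattice β] {f : α → β} {s : Set α} (hf : StrictAntiOn f s)
    (hbdd : BddBelow (f '' s)) {x y : α} (hx : x ∈ s) (hy : y ∈ s) (hxy : x < y) :
    sInf (f '' s) < f x :=
  (csInf_le hbdd (mem_image_of_mem f hy)).trans_lt (hf hx hy hxy)

theorem StrictAntiOn.lt_csSup_image_of_lt {α β : Type*} [Preorder α]
    [ConditionallyCompleteLattice β] {f : α → β} {s : Set α} (hf : StrictAntiOn f s)
    (hbdd : BddAbove (f '' s)) {x y : α} (hx : x ∈ s) (hy : y ∈ s) (hxy : x < y) :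
    f y < sSup (f '' s) :=
  (hf hx hy hxy).trans_le (le_csSup hbdd (mem_image_of_mem f hx))

/-- `t` is `θ*(α, y)` of the extended pivoting method for `f = F(y; ·)` on `Θ = (tl, tu)`,
where `lo` and `hi` stand for the supremum and the infimum of `f` over `Θ`. -/
structure IsExtendedPivot (f : ℝ → ℝ) (Θ : Set ℝ) (lo hi : ℝ) (tl tu : EReal) (α : ℝ)
    (t : EReal) : Prop where
  eq_lower : lo ≤ α → t = tl
  eq_upper : α ≤ hi → t = tu
  exists_eq : hi < α → α < lo → ∃ s ∈ Θ, f s = α ∧ t = s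

namespace IsExtendedPivot

variable {f : ℝ → ℝ} {Θ : Set ℝ} {lo hi α θ : ℝ} {tl tu t : EReal}

theorem coe_le_iff (h : IsExtendedPivot f Θ lo hi tl tu α t) (hf : StrictAntiOn f Θ)
    (hθ : θ ∈ Θ) (htl : tl < θ) (htu : θ < tu) (hhi : hi < f θ) (hlo : f θ < lo) :
    (θ : EReal) ≤ t ↔ α ≤ f θ := by
  rcases le_or_gt lo α with hα | hα
  · rw [h.eq_lower hα]
    exact iff_of_false htl.not_ge (hlo.trans_le hα).not_ge
  rcases le_or_gt α hi with hα' | hα'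
  · rw [h.eq_upper hα']
    exact iff_of_true htu.le (hα'.trans_lt hhi).le
  obtain ⟨s, hs, rfl, rfl⟩ := h.exists_eq hα' hα
  exact EReal.coe_le_coe_iff.trans (hf.le_iff_ge hs hθ).symm

theorem le_coe_iff (h : IsExtendedPivot f Θ lo hi tl tu α t) (hf : StrictAntiOn f Θ)
    (hθ : θ ∈ Θ) (htl : tl < θ) (htu : θ < tu) (hhi : hi < f θ) (hlo : f θ < lo) :
    t ≤ θ ↔ f θ ≤ α := by
  rcases le_or_gt lo α with hα | hα
  · rw [h.eq_lower hα]
    exact iff_of_true htl.le (hlo.trans_le hα).le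
  rcases le_or_gt α hi with hα' | hα'
  · rw [h.eq_upper hα']
    exact iff_of_false htu.not_ge (hα'.trans_lt hhi).not_ge
  obtain ⟨s, hs, rfl, rfl⟩ := h.exists_eq hα' hα
  exact EReal.coe_le_coe_iff.trans (hf.le_iff_ge hθ hs).symm

end IsExtendedPivot

theorem pivot_cdf_conditional_coverage_general
    (tl tu : EReal)
    (F : ℝ → ℝ → ℝ)
    (Θ : Set ℝ) (hΘ : Θ = {θ : ℝ | tl < (θ : EReal) ∧ (θ : EReal) < tu})
    (hFy : ∀ θ ∈ Θ, Continuous (fun y => F y θ))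
    (hanti : ∀ y : ℝ, StrictAntiOn (fun θ => F y θ) Θ)
    (μ : ℝ → Measure ℝ) (hprob : ∀ θ ∈ Θ, IsProbabilityMeasure (μ θ))
    (hcdf : ∀ θ ∈ Θ, ∀ y : ℝ, ((μ θ) (Iic y)).toReal = F y θ)
    (Flo Fhi : ℝ → ℝ)
    (hFlo : ∀ y, Flo y = sSup ((fun θ => F y θ) '' Θ))
    (hFhi : ∀ y, Fhi y = sInf ((fun θ => F y θ) '' Θ))
    (θstar : ℝ → ℝ → EReal)
    (hstar1 : ∀ α y, Flo y ≤ α → θstar α y = tl)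
    (hstar2 : ∀ α y, α ≤ Fhi y → θstar α y = tu)
    (hstar3 : ∀ α y, Fhi y < α → α < Flo y →
      ∃ t ∈ Θ, F y t = α ∧ θstar α y = (t : EReal))
    (α₁ α₂ : ℝ) (h1 : 0 < α₁) (h2 : 0 < α₂) (hsum : α₁ + α₂ < 1)
    (θ : ℝ) (hθ : θ ∈ Θ)
    (B : Set ℝ) (hB : B = {y : ℝ | θstar (1 - α₁) y < tu ∧ tl < θstar α₂ y}) :
    μ θ ({y : ℝ | θstar (1 - α₁) y ≤ (θ : EReal) ∧ (θ : EReal) ≤ θstar α₂ y} ∩ B) / μ θ B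
        = ENNReal.ofReal (1 - (α₁ + α₂)) / μ θ B ∧
      ENNReal.ofReal (1 - (α₁ + α₂)) ≤ ENNReal.ofReal (1 - (α₁ + α₂)) / μ θ B := by
  obtain ⟨hθl, hθu⟩ : tl < (θ : EReal) ∧ (θ : EReal) < tu := by rwa [hΘ] at hθ
  obtain ⟨θ₁, hθ₁l, hθ₁⟩ := EReal.lt_iff_exists_real_btwn.mp hθl
  obtain ⟨θ₂, hθ₂, hθ₂u⟩ := EReal.lt_iff_exists_real_btwn.mp hθu
  have hθ₁Θ : θ₁ ∈ Θ := hΘ ▸ ⟨hθ₁l, hθ₁.trans hθu⟩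
  have hθ₂Θ : θ₂ ∈ Θ := hΘ ▸ ⟨hθl.trans hθ₂, hθ₂u⟩
  have hF : ∀ t ∈ Θ, ∀ y, F y t = cdf (μ t) y := fun t ht y => by
    have := hprob t ht
    rw [cdf_eq_real, measureReal_def, hcdf t ht]
  have hbdd (y : ℝ) : F y '' Θ ⊆ Icc 0 1 := by
    rintro _ ⟨t, ht, rfl⟩
    have := hprob t ht
    exact hF t ht y ▸ ⟨cdf_nonneg _ _, cdf_le_one _ _⟩
  have hcover : {y : ℝ | θstar (1 - α₁) y ≤ (θ : EReal) ∧ (θ : EReal) ≤ θstar α₂ y}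
      = cdf (μ θ) ⁻¹' Icc α₂ (1 - α₁) := by
    ext y
    have hhi : Fhi y < F y θ := hFhi y ▸ (hanti y).csInf_image_lt_of_lt
      (bddBelow_Icc.mono (hbdd y)) hθ hθ₂Θ (EReal.coe_lt_coe_iff.mp hθ₂)
    have hlo : F y θ < Flo y := hFlo y ▸ (hanti y).lt_csSup_image_of_lt
      (bddAbove_Icc.mono (hbdd y)) hθ₁Θ hθ (EReal.coe_lt_coe_iff.mp hθ₁)
    have hpivot (α : ℝ) : IsExtendedPivot (F y) Θ (Flo y) (Fhi y) tl tu α (θstar α y) :=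
      ⟨hstar1 α y, hstar2 α y, hstar3 α y⟩
    rw [mem_ofPred_eq, (hpivot _).le_coe_iff (hanti y) hθ hθl hθu hhi hlo,
      (hpivot _).coe_le_iff (hanti y) hθ hθl hθu hhi hlo, mem_preimage, mem_Icc, ← hF θ hθ,
      and_comm]
  have hsub : cdf (μ θ) ⁻¹' Icc α₂ (1 - α₁) ⊆ B :=
    hcover ▸ hB ▸ fun y hy => ⟨hy.1.trans_lt hθu, hθl.trans_le hy.2⟩
  have := hprob θ hθ
  rw [hcover, inter_eq_left.mpr hsub, measure_cdf_preimage_Icc_of_continuous (μ θ)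
    ((hFy θ hθ).congr (hF θ hθ)) h2 (by linarith) (by linarith), sub_sub]
  exact ⟨rfl, (div_one _).symm.trans_le (ENNReal.div_le_div_left prob_le_one _)⟩

/-- Truncating Y to the "useful" set B(α₁,α₂) = {y : θ*(1−α₁,y) < θ̄ and θ*(α₂,y) > θ̲}
inflates the coverage probability to (1−α)/P_θ{Y ∈ B(α₁,α₂)}, which is at least 1−α. -/
theorem pivot_cdf_conditional_coverage
    (tl tu : EReal) (htltu : tl < tu)
    (F : ℝ → ℝ → ℝ)
    (Θ : Set ℝ) (hΘ : Θ = {θ : ℝ | tl < (θ : EReal) ∧ (θ : EReal) < tu})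
    (hFy : ∀ θ ∈ Θ, Continuous (fun y => F y θ))
    (hFθ : ∀ y : ℝ, ContinuousOn (fun θ => F y θ) Θ)
    (hanti : ∀ y : ℝ, StrictAntiOn (fun θ => F y θ) Θ)
    (μ : ℝ → Measure ℝ) (hprob : ∀ θ ∈ Θ, IsProbabilityMeasure (μ θ))
    (hcdf : ∀ θ ∈ Θ, ∀ y : ℝ, ((μ θ) (Iic y)).toReal = F y θ)
    (Flo Fhi : ℝ → ℝ)
    (hFlo : ∀ y, Flo y = sSup ((fun θ => F y θ) '' Θ))
    (hFhi : ∀ y, Fhi y = sInf ((fun θ => F y θ) '' Θ))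
    (θstar : ℝ → ℝ → EReal)
    (hstar1 : ∀ α y, Flo y ≤ α → θstar α y = tl)
    (hstar2 : ∀ α y, α ≤ Fhi y → θstar α y = tu)
    (hstar3 : ∀ α y, Fhi y < α → α < Flo y →
      ∃ t ∈ Θ, F y t = α ∧ θstar α y = (t : EReal))
    (α₁ α₂ : ℝ) (h1 : 0 < α₁) (h2 : 0 < α₂) (hsum : α₁ + α₂ < 1)
    (θ : ℝ) (hθ : θ ∈ Θ)
    (B : Set ℝ) (hB : B = {y : ℝ | θstar (1 - α₁) y < tu ∧ tl < θstar α₂ y}) :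
    μ θ ({y : ℝ | θstar (1 - α₁) y ≤ (θ : EReal) ∧ (θ : EReal) ≤ θstar α₂ y} ∩ B) / μ θ B
        = ENNReal.ofReal (1 - (α₁ + α₂)) / μ θ B ∧
      ENNReal.ofReal (1 - (α₁ + α₂)) ≤ ENNReal.ofReal (1 - (α₁ + α₂)) / μ θ B :=
  pivot_cdf_conditional_coverage_general tl tu F Θ hΘ hFy hanti μ hprob hcdf Flo Fhi hFlo hFhi θstar
    hstar1 hstar2 hstar3 α₁ α₂ h1 h2 hsum θ hθ B hB
end
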